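/- arXiv:2208.09723 — 4 statements merged into one kernel-verified Lean document; each statement's English description precedes it below -/
import Mathlib

section
/- Let X ∈ ℝ^{m×n} be a matrix of rank r, let I ⊆ {1,…,m} and J ⊆ {1,…,n}, and set C = [X]_{:,J}, R = [X]_{I,:}, and U = [X]_{I,J}. Then X = C U† R if and only if rank(U) = rank(X) = r. -/
open Matrix

section Aux

variable {α β γ : Type*}

/-- A column submatrix's `mulVec` factors through the original matrix. -/
lemma aux_submatrix_id_mulVec [Fintype β] [Fintype γ] [DecidableEq β]
    (A : Matrix α β ℝ) (f : γ → β) (v : γ → ℝ) :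
    (A.submatrix id f).mulVec v =
      A.mulVec (fun b => ∑ j ∈ Finset.univ.filter (fun j => f j = b), v j) := by
  funext i
  simp only [mulVec, dotProduct, submatrix_apply, id_eq, Finset.mul_sum]
  rw [← Finset.sum_fiberwise (Finset.univ : Finset γ) f (fun j => A i (f j) * v j)]
  refine Finset.sum_congr rfl fun b _ => Finset.sum_congr rfl fun j hj => ?_
  rw [(Finset.mem_filter.1 hj).2]

/-- Column space of a column submatrix is contained in the column space. -/
lemma aux_range_submatrix_le [Fintype β] [Fintype γ] [DecidableEq β]
    (A : Matrix α β ℝ) (f : γ → β) :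
    LinearMap.range (A.submatrix id f).mulVecLin ≤ LinearMap.range A.mulVecLin := by
  rintro x ⟨v, rfl⟩
  exact ⟨_, (aux_submatrix_id_mulVec A f v).symm⟩

/-- Rank of a column submatrix is at most the rank. -/
lemma aux_rank_submatrix_id_le [Fintype α] [Fintype β] [Fintype γ] [DecidableEq β]
    (A : Matrix α β ℝ) (f : γ → β) :
    (A.submatrix id f).rank ≤ A.rank :=
  Submodule.finrank_mono (aux_range_submatrix_le A f)

/-- Factorization through column space inclusion. -/
lemma aux_exists_factor [Fintype β] [Fintype γ] [DecidableEq γ]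
    (A : Matrix α γ ℝ) (B : Matrix α β ℝ)
    (h : LinearMap.range A.mulVecLin ≤ LinearMap.range B.mulVecLin) :
    ∃ W : Matrix β γ ℝ, B * W = A := by
  have hc : ∀ j : γ, ∃ w : β → ℝ, B.mulVec w = fun i => A i j := by
    intro j
    have hcol : (fun i => A i j) ∈ LinearMap.range A.mulVecLin := by
      refine ⟨Pi.single j 1, ?_⟩
      funext i
      simp [mulVecLin_apply, mulVec_single]
    exact h hcol
  choose w hw using hc
  refine ⟨Matrix.of (fun k j => w j k), ?_⟩
  ext i j
  have := congrFun (hw j) i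
  simpa [Matrix.mul_apply, mulVec, dotProduct] using this

end Aux

/-- `B` is the Moore–Penrose pseudoinverse of `A`, characterized by the four
Penrose conditions (over `ℝ`, where conjugate transpose is transpose). -/
def IsMPInv {m n : Type*} [Fintype m] [Fintype n] (A : Matrix m n ℝ)
    (B : Matrix n m ℝ) : Prop :=
  A * B * A = A ∧ B * A * B = B ∧ (A * B)ᵀ = A * B ∧ (B * A)ᵀ = B * A

/-- Let `X ∈ ℝ^{m×n}` have rank `r`, let `I ⊆ [m]`, `J ⊆ [n]`,
and set `C = X[:,J]`, `R = X[I,:]`, `U = X[I,J]`. Then `X = C U† R` if and only if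
`rank U = rank X = r`. -/
theorem cur_decomposition_iff (m n r : ℕ) (X : Matrix (Fin m) (Fin n) ℝ)
    (hrankX : X.rank = r) (I : Finset (Fin m)) (J : Finset (Fin n))
    (C : Matrix (Fin m) ↥J ℝ) (R : Matrix ↥I (Fin n) ℝ) (U : Matrix ↥I ↥J ℝ)
    (hC : C = X.submatrix id (fun j : ↥J => (j : Fin n)))
    (hR : R = X.submatrix (fun i : ↥I => (i : Fin m)) id)
    (hU : U = X.submatrix (fun i : ↥I => (i : Fin m)) (fun j : ↥J => (j : Fin n)))
    (Udag : Matrix ↥J ↥I ℝ) (hUdag : IsMPInv U Udag) :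
    X = C * Udag * R ↔ (U.rank = X.rank ∧ X.rank = r) := by
  -- U is a column submatrix of R
  have hUR : U = R.submatrix id (fun j : ↥J => (j : Fin n)) := by
    rw [hU, hR]; rfl
  -- Rᵀ is a column submatrix of Xᵀ
  have hRt : Rᵀ = Xᵀ.submatrix id (fun i : ↥I => (i : Fin m)) := by
    rw [hR]; rfl
  have hUleR : U.rank ≤ R.rank := by
    rw [hUR]; exact aux_rank_submatrix_id_le R _
  have hRleX : R.rank ≤ X.rank := by
    rw [← Matrix.rank_transpose R, ← Matrix.rank_transpose X, hRt]
    exact aux_rank_submatrix_id_le Xᵀ _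
  have hUleX : U.rank ≤ X.rank := hUleR.trans hRleX
  constructor
  · -- forward direction
    intro h
    refine ⟨le_antisymm hUleX ?_, hrankX⟩
    calc X.rank = (C * Udag * R).rank := by rw [h]
      _ ≤ (C * Udag).rank := Matrix.rank_mul_le_left _ _
      _ ≤ Udag.rank := Matrix.rank_mul_le_right _ _
      _ = (Udag * U * Udag).rank := by rw [hUdag.2.1]
      _ ≤ (Udag * U).rank := Matrix.rank_mul_le_left _ _
      _ ≤ U.rank := Matrix.rank_mul_le_right _ _
  · -- backward direction
    rintro ⟨hUX, -⟩
    have hRrank : R.rank = X.rank := le_antisymm hRleX (hUX ▸ hUleR)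
    -- column space of R equals column space of U
    have hle1 : LinearMap.range U.mulVecLin ≤ LinearMap.range R.mulVecLin := by
      rw [hUR]; exact aux_range_submatrix_le R _
    have heq1 : LinearMap.range U.mulVecLin = LinearMap.range R.mulVecLin := by
      apply Submodule.eq_of_le_of_finrank_le hle1
      show R.rank ≤ U.rank
      rw [hRrank, hUX]
    obtain ⟨Z, hZ⟩ : ∃ Z, U * Z = R :=
      aux_exists_factor R U (le_of_eq heq1.symm)
    -- row space of X equals row space of R
    have hle2 : LinearMap.range Rᵀ.mulVecLin ≤ LinearMap.range Xᵀ.mulVecLin := by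
      rw [hRt]; exact aux_range_submatrix_le Xᵀ _
    have heq2 : LinearMap.range Rᵀ.mulVecLin = LinearMap.range Xᵀ.mulVecLin := by
      apply Submodule.eq_of_le_of_finrank_le hle2
      show Xᵀ.rank ≤ Rᵀ.rank
      rw [Matrix.rank_transpose, Matrix.rank_transpose, hRrank]
    obtain ⟨W, hW⟩ : ∃ W, Rᵀ * W = Xᵀ :=
      aux_exists_factor Xᵀ Rᵀ (le_of_eq heq2.symm)
    have hXWR : X = Wᵀ * R := by
      have := congrArg Matrix.transpose hW
      rw [Matrix.transpose_mul, Matrix.transpose_transpose, Matrix.transpose_transpose]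
        at this
      exact this.symm
    have hCWU : C = Wᵀ * U := by
      rw [hC, hXWR, hUR,
        Matrix.submatrix_mul Wᵀ R id id (fun j : ↥J => (j : Fin n)) Function.bijective_id,
        Matrix.submatrix_id_id]
    have hkey : U * (Udag * (U * Z)) = U * Z := by
      have h1 := hUdag.1
      calc U * (Udag * (U * Z)) = U * Udag * U * Z := by
            simp only [Matrix.mul_assoc]
        _ = U * Z := by rw [h1]
    rw [hXWR, hCWU, ← hZ]
    simp only [Matrix.mul_assoc, hkey]
end

section
/- Let X ∈ ℝ^{n×n} be a rank-r matrix that is {μ₁,μ₂}-incoherent. Suppose I is a multiset of row indices obtained by drawing |I| ≥ 10 μ₁ r log(n) indices i.i.d. uniformly from {1,…,n} (sampling with replacement), and J is a multiset of column indices obtained by drawing |J| ≥ 10 μ₂ r log(n) indices i.i.d. uniformly from {1,…,n}. Then with probability at least 1 − 4r/n², the submatrix U = [X]_{I,J} satisfies rank(U) = rank(X). -/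
/-!
The rows `w i` of `W` form a Parseval frame of `ℝʳ` (`∑ i, ⟪w i, x⟫² = ‖x‖²`) with
`‖w i‖² ≤ μ₁ r / n`. Summing the frame identity over an orthonormal basis of `Sᗮ` shows that
`codim S ≤ (μ₁ r / n) · #{i | w i ∉ S}` for every subspace `S`, so appending a uniformly random row
to a sample multiplies the expected codimension of its span by at most `1 - 1 / (μ₁ r)`. After
`k` rows the expected codimension is at most `r (1 - 1/(μ₁ r))ᵏ ≤ r e^{-k/(μ₁ r)} ≤ r / n¹⁰`, and
Markov's inequality bounds the probability that the sampled rows of `W` do not span by `r / n²`;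
likewise for `V`. When both sampled blocks `W_I`, `V_J` have rank `r`, so does
`[X]_{I,J} = W_I Σ V_Jᵀ`.
-/

open Matrix
open scoped Classical

/-- Probability of the event `P` under the uniform distribution on the finite
type `α` (counting measure normalized). -/
noncomputable def unifProb {α : Type*} [Fintype α] (P : α → Prop) : ℝ :=
  ((Finset.univ.filter P).card : ℝ) / (Fintype.card α : ℝ)

open Finset Module Submodule

section UniformProbability

variable {α β : Type*} [Fintype α] [Fintype β]

theorem unifProb_nonneg (P : α → Prop) : 0 ≤ unifProb P := by
  unfold unifProb
  positivity

theorem unifProb_mono {P Q : α → Prop} (h : ∀ x, P x → Q x) : unifProb P ≤ unifProb Q := by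
  unfold unifProb
  gcongr
  exact h _

theorem unifProb_not [Nonempty α] (P : α → Prop) : unifProb (fun x => ¬P x) = 1 - unifProb P := by
  have hα : (Fintype.card α : ℝ) ≠ 0 := by positivity
  rw [unifProb, unifProb, eq_sub_iff_add_eq, ← add_div, div_eq_one_iff_eq hα, add_comm]
  have h := card_filter_add_card_filter_not (s := univ) P
  rw [card_univ] at h
  convert congrArg (Nat.cast : ℕ → ℝ) h using 1
  push_cast
  congr

theorem unifProb_prod (P : α → Prop) (Q : β → Prop) :
    unifProb (fun x : α × β => P x.1 ∧ Q x.2) = unifProb P * unifProb Q := by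
  rw [unifProb, unifProb, unifProb, div_mul_div_comm, Fintype.card_prod, ← Nat.cast_mul,
    ← card_product, Nat.cast_mul]
  congr 3
  ext
  simp

theorem unifProb_le_sum_div_card {P : α → Prop} {g : α → ℝ} (hg : ∀ x, 0 ≤ g x)
    (hP : ∀ x, P x → 1 ≤ g x) : unifProb P ≤ (∑ x, g x) / Fintype.card α := by
  rw [unifProb]
  gcongr
  calc (#{x | P x} : ℝ) = ∑ x ∈ {x | P x}, 1 := by simp
    _ ≤ ∑ x ∈ {x | P x}, g x := sum_le_sum fun x hx => hP x (mem_filter.mp hx).2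
    _ ≤ ∑ x, g x := sum_le_sum_of_subset_of_nonneg (filter_subset _ _) fun x _ _ => hg x

theorem one_sub_unifProb_not_sub_unifProb_not_le [Nonempty α] [Nonempty β] (P : α → Prop)
    (Q : β → Prop) :
    1 - unifProb (fun a => ¬P a) - unifProb (fun b => ¬Q b) ≤
      unifProb (fun x : α × β => P x.1 ∧ Q x.2) := by
  have h : 0 ≤ (1 - unifProb P) * (1 - unifProb Q) := by
    rw [← unifProb_not, ← unifProb_not]
    exact mul_nonneg (unifProb_nonneg _) (unifProb_nonneg _)
  rw [unifProb_prod, unifProb_not, unifProb_not]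
  nlinarith [h]

end UniformProbability

theorem finrank_orthogonal_sup_span_singleton {𝕜 E : Type*} [RCLike 𝕜] [NormedAddCommGroup E]
    [InnerProductSpace 𝕜 E] [FiniteDimensional 𝕜 E] {S : Submodule 𝕜 E} {v : E} (hv : v ∉ S) :
    finrank 𝕜 (S ⊔ 𝕜 ∙ v)ᗮ + 1 = finrank 𝕜 Sᗮ := by
  have h₁ := finrank_add_finrank_orthogonal S
  have h₂ := finrank_add_finrank_orthogonal (S ⊔ 𝕜 ∙ v)
  rw [finrank_sup_span_singleton hv] at h₂
  omega

section ParsevalFrame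

variable {ι E : Type*} [Fintype ι] [NormedAddCommGroup E] [InnerProductSpace ℝ E]

def IsParsevalFrame (w : ι → E) : Prop :=
  ∀ x, ∑ i, inner ℝ (w i) x ^ 2 = ‖x‖ ^ 2

variable [FiniteDimensional ℝ E] {w : ι → E} {c : ℝ}

theorem IsParsevalFrame.finrank_orthogonal_le (hw : IsParsevalFrame w)
    (hc : ∀ i, ‖w i‖ ^ 2 ≤ c) (S : Submodule ℝ E) :
    (finrank ℝ Sᗮ : ℝ) ≤ c * #{i | w i ∉ S} := by
  set b := stdOrthonormalBasis ℝ Sᗮ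
  have hb : Orthonormal ℝ fun j => (b j : E) := b.orthonormal.comp_linearIsometry Sᗮ.subtypeₗᵢ
  have hterm : ∀ i, ∑ j, inner ℝ (w i) (b j : E) ^ 2 ≤ if w i ∉ S then c else 0 := by
    intro i
    by_cases hi : w i ∈ S
    · simp [hi, (mem_orthogonal S _).mp (b _).2 _ hi]
    · rw [if_pos hi]
      calc ∑ j, inner ℝ (w i) (b j : E) ^ 2 = ∑ j, ‖inner ℝ (b j : E) (w i)‖ ^ 2 := by
              simp only [real_inner_comm, Real.norm_eq_abs, sq_abs]
        _ ≤ ‖w i‖ ^ 2 := hb.sum_inner_products_le _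
        _ ≤ c := hc i
  calc (finrank ℝ Sᗮ : ℝ) = ∑ j, ‖(b j : E)‖ ^ 2 := by simp [hb.1]
    _ = ∑ i, ∑ j, inner ℝ (w i) (b j : E) ^ 2 := by
      rw [sum_comm]
      exact sum_congr rfl fun j _ => (hw _).symm
    _ ≤ ∑ i, if w i ∉ S then c else 0 := sum_le_sum fun i _ => hterm i
    _ = c * #{i | w i ∉ S} := by rw [← sum_filter, sum_const, nsmul_eq_mul, mul_comm]

theorem IsParsevalFrame.one_le_card_mul [Nontrivial E] (hw : IsParsevalFrame w)
    (hc : ∀ i, ‖w i‖ ^ 2 ≤ c) : 1 ≤ Fintype.card ι * c := by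
  have h := hw.finrank_orthogonal_le hc ⊥
  have hB : (#{i | w i ∉ (⊥ : Submodule ℝ E)} : ℝ) ≤ Fintype.card ι := by
    exact_mod_cast card_filter_le _ _
  have hE : (1 : ℝ) ≤ finrank ℝ (⊥ : Submodule ℝ E)ᗮ := by
    rw [bot_orthogonal_eq_top, finrank_top]
    exact_mod_cast finrank_pos
  have hc0 : 0 < c := by
    by_contra! hc0
    nlinarith [(#{i | w i ∉ (⊥ : Submodule ℝ E)}).cast_nonneg (α := ℝ)]
  nlinarith [mul_le_mul_of_nonneg_left hB hc0.le]

theorem IsParsevalFrame.sum_finrank_orthogonal_sup_le (hw : IsParsevalFrame w)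
    (hc : ∀ i, ‖w i‖ ^ 2 ≤ c) (S : Submodule ℝ E) :
    ∑ i, (finrank ℝ (S ⊔ ℝ ∙ w i)ᗮ : ℝ) ≤ (Fintype.card ι - 1 / c) * finrank ℝ Sᗮ := by
  have hterm : ∀ i, (finrank ℝ (S ⊔ ℝ ∙ w i)ᗮ : ℝ) =
      finrank ℝ Sᗮ - if w i ∉ S then 1 else 0 := by
    intro i
    by_cases hi : w i ∈ S
    · rw [if_neg (not_not.mpr hi), sup_eq_left.mpr ((span_singleton_le_iff_mem _ _).mpr hi),
        sub_zero]
    · rw [if_pos hi, ← finrank_orthogonal_sup_span_singleton hi]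
      push_cast
      ring
  have hcount : (finrank ℝ Sᗮ : ℝ) / c ≤ #{i | w i ∉ S} := by
    rcases lt_or_ge 0 c with hc0 | hc0
    · rw [div_le_iff₀ hc0, mul_comm]
      exact hw.finrank_orthogonal_le hc S
    · exact (div_nonpos_of_nonneg_of_nonpos (Nat.cast_nonneg _) hc0).trans (Nat.cast_nonneg _)
  simp only [hterm, sum_sub_distrib, sum_const, card_univ, nsmul_eq_mul, sum_boole]
  linarith [show (Fintype.card ι - 1 / c) * finrank ℝ Sᗮ =
    Fintype.card ι * finrank ℝ Sᗮ - finrank ℝ Sᗮ / c by ring]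

theorem IsParsevalFrame.sum_finrank_orthogonal_span_le (hw : IsParsevalFrame w)
    (hc : ∀ i, ‖w i‖ ^ 2 ≤ c) (k : ℕ) :
    ∑ f : Fin k → ι, (finrank ℝ (span ℝ (Set.range (w ∘ f)))ᗮ : ℝ) ≤
      (Fintype.card ι - 1 / c) ^ k * finrank ℝ E := by
  rcases subsingleton_or_nontrivial E with _ | _
  · simp [finrank_zero_of_subsingleton]
  have hq : 0 ≤ (Fintype.card ι : ℝ) - 1 / c := by
    have h := hw.one_le_card_mul hc
    have hc0 : 0 < c :=
      pos_of_mul_pos_right (a := (Fintype.card ι : ℝ)) (by linarith) (by positivity)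
    rw [sub_nonneg, div_le_iff₀ hc0]
    exact h
  induction k with
  | zero => simpa using finrank_le _
  | succ k ih =>
    rw [← (Fin.consEquiv fun _ => ι).sum_comp, Fintype.sum_prod_type_right]
    calc ∑ g : Fin k → ι, ∑ i, (finrank ℝ (span ℝ (Set.range (w ∘ Fin.cons i g)))ᗮ : ℝ)
        = ∑ g : Fin k → ι, ∑ i, (finrank ℝ (span ℝ (Set.range (w ∘ g)) ⊔ ℝ ∙ w i)ᗮ : ℝ) := by
          refine sum_congr rfl fun g _ => sum_congr rfl fun i _ => ?_
          rw [Fin.comp_cons, Fin.range_cons, span_insert, sup_comm]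
      _ ≤ ∑ g : Fin k → ι, (Fintype.card ι - 1 / c) *
            finrank ℝ (span ℝ (Set.range (w ∘ g)))ᗮ :=
          sum_le_sum fun g _ => hw.sum_finrank_orthogonal_sup_le hc _
      _ ≤ (Fintype.card ι - 1 / c) ^ (k + 1) * finrank ℝ E := by
          rw [← mul_sum, pow_succ', mul_assoc]
          exact mul_le_mul_of_nonneg_left ih hq

theorem IsParsevalFrame.unifProb_span_ne_top_le (hw : IsParsevalFrame w)
    (hc : ∀ i, ‖w i‖ ^ 2 ≤ c) {k : ℕ} {t : ℝ} (hk : t * (Fintype.card ι * c) ≤ k) :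
    unifProb (fun f : Fin k → ι => span ℝ (Set.range (w ∘ f)) ≠ ⊤) ≤
      finrank ℝ E * Real.exp (-t) := by
  have hmarkov := unifProb_le_sum_div_card
    (P := fun f : Fin k → ι => span ℝ (Set.range (w ∘ f)) ≠ ⊤)
    (fun f => Nat.cast_nonneg (finrank ℝ (span ℝ (Set.range (w ∘ f)))ᗮ)) fun f hf => by
      rw [Nat.one_le_cast, Nat.one_le_iff_ne_zero, Ne, finrank_eq_zero, orthogonal_eq_bot_iff]
      exact hf
  rw [Fintype.card_fun, Fintype.card_fin, Nat.cast_pow] at hmarkov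
  rcases subsingleton_or_nontrivial E with _ | _
  · simpa [finrank_zero_of_subsingleton] using hmarkov
  have hnc := hw.one_le_card_mul hc
  have hc0 : 0 < c := pos_of_mul_pos_right (a := (Fintype.card ι : ℝ)) (by linarith) (by positivity)
  have hn : (0 : ℝ) < Fintype.card ι := pos_of_mul_pos_left (by linarith) hc0.le
  have hq : 0 ≤ 1 - 1 / (Fintype.card ι * c) := by
    rw [sub_nonneg, div_le_one (by positivity)]
    exact hnc
  calc unifProb (fun f : Fin k → ι => span ℝ (Set.range (w ∘ f)) ≠ ⊤)
      ≤ (Fintype.card ι - 1 / c) ^ k * finrank ℝ E / Fintype.card ι ^ k := by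
        refine hmarkov.trans ?_
        gcongr
        exact hw.sum_finrank_orthogonal_span_le hc k
    _ = (1 - 1 / (Fintype.card ι * c)) ^ k * finrank ℝ E := by
        rw [mul_div_right_comm, ← div_pow]
        congr 2
        field_simp
    _ ≤ Real.exp (-(1 / (Fintype.card ι * c))) ^ k * finrank ℝ E := by
        gcongr
        exact Real.one_sub_le_exp_neg _
    _ ≤ Real.exp (-t) * finrank ℝ E := by
        rw [← Real.exp_nat_mul]
        gcongr
        rw [mul_neg, neg_le_neg_iff, mul_one_div, le_div_iff₀ (by positivity)]
        exact hk
    _ = finrank ℝ E * Real.exp (-t) := mul_comm _ _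

end ParsevalFrame

section Matrix

variable {m n o : Type*}

theorem isParsevalFrame_toLp_rows [Fintype m] [Fintype n] [DecidableEq n] {W : Matrix m n ℝ}
    (hW : Wᵀ * W = 1) :
    IsParsevalFrame fun i => WithLp.toLp 2 (W i) := by
  intro x
  have hinner : ∀ i, inner ℝ (WithLp.toLp 2 (W i)) x = (W *ᵥ x.ofLp) i := fun i =>
    dotProduct_comm _ _
  calc ∑ i, inner ℝ (WithLp.toLp 2 (W i)) x ^ 2 = (W *ᵥ x.ofLp) ⬝ᵥ (W *ᵥ x.ofLp) := by
        simp only [hinner, sq, dotProduct]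
    _ = x.ofLp ⬝ᵥ x.ofLp := by
        rw [dotProduct_mulVec, ← mulVec_transpose, mulVec_mulVec, hW, one_mulVec]
    _ = ‖x‖ ^ 2 := by
        rw [EuclideanSpace.real_norm_sq_eq]
        simp only [sq, dotProduct]

theorem Matrix.rank_eq_card_iff_span_toLp_rows_eq_top [Finite m] [Fintype n] (A : Matrix m n ℝ) :
    A.rank = Fintype.card n ↔ span ℝ (Set.range fun i => WithLp.toLp 2 (A i)) = ⊤ := by
  have hspan : span ℝ (Set.range fun i => WithLp.toLp 2 (A i)) =
      (span ℝ (Set.range A.row)).map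
        ((WithLp.linearEquiv 2 ℝ (n → ℝ)).symm : (n → ℝ) →ₗ[ℝ] EuclideanSpace ℝ n) := by
    rw [map_span, ← Set.range_comp]
    rfl
  rw [rank_eq_finrank_span_row, hspan,
    ← LinearEquiv.finrank_map_eq (WithLp.linearEquiv 2 ℝ (n → ℝ)).symm]
  constructor
  · intro h
    exact eq_top_of_finrank_eq (by rw [h, finrank_euclideanSpace])
  · intro h
    rw [h, finrank_top, finrank_euclideanSpace]

theorem Matrix.rank_mul_eq_left_of_rank_eq_card [Fintype n] [Fintype o] {K : Type*} [Field K]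
    (A : Matrix m n K) {B : Matrix n o K} (hB : B.rank = Fintype.card n) :
    (A * B).rank = A.rank := by
  have hrange : LinearMap.range B.mulVecLin = ⊤ :=
    eq_top_of_finrank_eq (by rw [← Matrix.rank, hB, finrank_fintype_fun_eq_card])
  rw [Matrix.rank, Matrix.rank, mulVecLin_mul, LinearMap.range_comp_of_range_eq_top _ hrange]

theorem Matrix.rank_mul_diagonal_mul_transpose [Fintype m] [Fintype n] [DecidableEq n]
    {p K : Type*} [Fintype p] [Field K] (A : Matrix m n K) {B : Matrix p n K} {σ : n → K}
    (hσ : ∀ i, σ i ≠ 0) (hB : B.rank = Fintype.card n) :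
    (A * diagonal σ * Bᵀ).rank = A.rank := by
  have hσdet : IsUnit (diagonal σ).det := by
    rw [det_diagonal, isUnit_iff_ne_zero, prod_ne_zero_iff]
    exact fun i _ => hσ i
  rw [rank_mul_eq_left_of_rank_eq_card _ (by rw [rank_transpose, hB]),
    rank_mul_eq_left_of_isUnit_det _ _ hσdet]

end Matrix

theorem unifProb_rank_submatrix_ne_le {n r k : ℕ} {μ : ℝ} (hn : 0 < n)
    {W : Matrix (Fin n) (Fin r) ℝ} (hW : Wᵀ * W = 1)
    (hinc : ∀ i, √(∑ j, W i j ^ 2) ≤ √(μ * r / n)) (hk : (k : ℝ) ≥ 10 * μ * r * Real.log n) :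
    unifProb (fun f : Fin k → Fin n => (W.submatrix f id).rank ≠ r) ≤ r / n ^ 2 := by
  -- `√` truncates negative arguments to `0`, so `hinc` only bounds `‖W i‖²` by `max (μ r / n) 0`.
  have hc : ∀ i, ‖WithLp.toLp 2 (W i)‖ ^ 2 ≤ max (μ * r / n) 0 := fun i => by
    rw [EuclideanSpace.real_norm_sq_eq, ← Real.sq_sqrt']
    calc ∑ j, W i j ^ 2 = √(∑ j, W i j ^ 2) ^ 2 := (Real.sq_sqrt (by positivity)).symm
      _ ≤ √(μ * r / n) ^ 2 := pow_le_pow_left₀ (Real.sqrt_nonneg _) (hinc i) 2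
  have hk' : 10 * Real.log n * (Fintype.card (Fin n) * max (μ * r / n) 0) ≤ k := by
    rw [Fintype.card_fin]
    rcases le_total (μ * r / n) 0 with h | h
    · simp [max_eq_right h]
    · rw [max_eq_left h, mul_div_cancel₀ _ (by positivity)]
      linarith
  have hbound := (isParsevalFrame_toLp_rows hW).unifProb_span_ne_top_le hc hk'
  rw [finrank_euclideanSpace_fin] at hbound
  have hdecay : Real.exp (-(10 * Real.log n)) ≤ 1 / (n : ℝ) ^ 2 := by
    have hn1 : (1 : ℝ) ≤ n := by exact_mod_cast hn
    rw [Real.exp_neg, show 10 * Real.log n = Real.log (n ^ 10) by simp [Real.log_pow],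
      Real.exp_log (by positivity), one_div]
    exact inv_anti₀ (by positivity) (pow_le_pow_right₀ hn1 (by norm_num))
  calc unifProb (fun f : Fin k → Fin n => (W.submatrix f id).rank ≠ r)
      = unifProb (fun f : Fin k → Fin n =>
          span ℝ (Set.range ((fun i => WithLp.toLp 2 (W i)) ∘ f)) ≠ ⊤) := by
        congr 1
        ext f
        have h := (W.submatrix f id).rank_eq_card_iff_span_toLp_rows_eq_top
        rw [Fintype.card_fin] at h
        exact h.not
    _ ≤ r * Real.exp (-(10 * Real.log n)) := hbound
    _ ≤ r / n ^ 2 := by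
        rw [← mul_one_div]
        gcongr

/-- Let `X ∈ ℝ^{n×n}` be rank-`r` and `{μ₁,μ₂}`-incoherent
(expressed via a compact SVD `X = W Σ Vᵀ` with row-norm bounds on `W` and `V`).
Draw `kI ≥ 10 μ₁ r log n` row indices and `kJ ≥ 10 μ₂ r log n` column indices
i.i.d. uniformly from `[n]` (with replacement, encoded as uniform random
functions `Fin kI → Fin n`, `Fin kJ → Fin n`). Then with probability at least
`1 − 4r/n²`, the submatrix `U = X[I,J]` satisfies `rank U = rank X`. -/
theorem uniform_sampling_rank_intersection (n r kI kJ : ℕ) (hn : 0 < n)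
    (X : Matrix (Fin n) (Fin n) ℝ) (hrank : X.rank = r) (μ₁ μ₂ : ℝ)
    (W V : Matrix (Fin n) (Fin r) ℝ) (σ : Fin r → ℝ) (hσ : ∀ i, 0 < σ i)
    (hX : X = W * Matrix.diagonal σ * Vᵀ)
    (hWortho : Wᵀ * W = 1) (hVortho : Vᵀ * V = 1)
    (hWinc : ∀ i, Real.sqrt (∑ j, (W i j) ^ 2) ≤ Real.sqrt (μ₁ * r / n))
    (hVinc : ∀ i, Real.sqrt (∑ j, (V i j) ^ 2) ≤ Real.sqrt (μ₂ * r / n))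
    (hkI : (kI : ℝ) ≥ 10 * μ₁ * r * Real.log n)
    (hkJ : (kJ : ℝ) ≥ 10 * μ₂ * r * Real.log n) :
    1 - 4 * r / (n : ℝ) ^ 2 ≤
      unifProb (fun fg : (Fin kI → Fin n) × (Fin kJ → Fin n) =>
        (X.submatrix fg.1 fg.2).rank = X.rank) := by
  have hgood : ∀ fg : (Fin kI → Fin n) × (Fin kJ → Fin n),
      (W.submatrix fg.1 id).rank = r ∧ (V.submatrix fg.2 id).rank = r →
        (X.submatrix fg.1 fg.2).rank = X.rank := by
    rintro ⟨f, g⟩ ⟨hf, hg⟩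
    rw [hrank, hX]
    exact ((W.submatrix f id).rank_mul_diagonal_mul_transpose (B := V.submatrix g id)
      (fun i => (hσ i).ne') (by rw [hg, Fintype.card_fin])).trans hf
  have : Nonempty (Fin n) := ⟨⟨0, hn⟩⟩
  have hprod : 1 - unifProb (fun f : Fin kI → Fin n => (W.submatrix f id).rank ≠ r)
      - unifProb (fun g : Fin kJ → Fin n => (V.submatrix g id).rank ≠ r) ≤
      unifProb (fun fg : (Fin kI → Fin n) × (Fin kJ → Fin n) =>
        (W.submatrix fg.1 id).rank = r ∧ (V.submatrix fg.2 id).rank = r) :=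
    one_sub_unifProb_not_sub_unifProb_not_le _ _
  have hW := unifProb_rank_submatrix_ne_le hn hWortho hWinc hkI
  have hV := unifProb_rank_submatrix_ne_le hn hVortho hVinc hkJ
  have hr : 0 ≤ (r : ℝ) / n ^ 2 := by positivity
  calc 1 - 4 * r / (n : ℝ) ^ 2
      ≤ unifProb (fun fg : (Fin kI → Fin n) × (Fin kJ → Fin n) =>
          (W.submatrix fg.1 id).rank = r ∧ (V.submatrix fg.2 id).rank = r) := by
        rw [mul_div_assoc]
        linarith
    _ ≤ _ := unifProb_mono hgood
end

section
/- Let X ∈ ℝ^{m×n} be a matrix of rank r, let I ⊆ {1,…,m} and J ⊆ {1,…,n}, and set C = [X]_{:,J}, R = [X]_{I,:}, and U = [X]_{I,J}. If rank(C) = rank(R) = rank(X) = r, then X = C U† R. -/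
/-! Since `C = X[:,J]` has the rank of `X`, its columns span the column space of `X`, so
`X = C W` for some `W`; dually `X = Z R`. Restricting these factorizations to `J`, resp. `I`,
gives `C = Z U` and `R = U W`, hence `X = Z U W = Z U U† U W = C U† R`. -/

open Matrix

open Module Submodule Set

namespace Matrix

variable {K : Type*} [Field K] {m n l o : Type*}

lemma span_range_col_submatrix_le (A : Matrix m n K) (f : l → n) :
    span K (range (A.submatrix id f).col) ≤ span K (range A.col) :=
  span_mono fun _ ⟨j, hj⟩ => ⟨f j, hj⟩

theorem exists_eq_submatrix_col_mul_of_rank_eq [Fintype n] [Fintype l] (A : Matrix m n K)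
    (f : l → n) (h : (A.submatrix id f).rank = A.rank) :
    ∃ W : Matrix l n K, A = A.submatrix id f * W := by
  have hspan : span K (range (A.submatrix id f).col) = span K (range A.col) := by
    have := FiniteDimensional.span_of_finite K (finite_range A.col)
    refine eq_of_le_of_finrank_eq (span_range_col_submatrix_le A f) ?_
    simpa only [rank_eq_finrank_span_cols] using h
  have hcol (j : n) : ∃ w : l → K, ∑ k, w k • (A.submatrix id f).col k = A.col j :=
    (mem_span_range_iff_exists_fun K).1 (hspan ▸ subset_span ⟨j, rfl⟩)
  choose w hw using hcol
  refine ⟨of fun k j => w j k, ext fun i j => ?_⟩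
  simpa [mul_apply, mul_comm] using (congrFun (hw j) i).symm

theorem exists_eq_mul_submatrix_row_of_rank_eq [Fintype m] [Fintype n] [Fintype l]
    (A : Matrix m n K) (g : l → m) (h : (A.submatrix g id).rank = A.rank) :
    ∃ Z : Matrix m l K, A = Z * A.submatrix g id := by
  obtain ⟨W, hW⟩ := Aᵀ.exists_eq_submatrix_col_mul_of_rank_eq g <| by
    rwa [← transpose_submatrix, rank_transpose, rank_transpose]
  refine ⟨Wᵀ, ?_⟩
  simpa [transpose_mul] using congrArg transpose hW

theorem mul_mul_mul_eq_of_mul_mul_eq_self {α : Type*} [Semiring α] [Fintype l] [Fintype o]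
    (Z : Matrix m l α) (U : Matrix l o α) (V : Matrix o l α) (W : Matrix o n α)
    (hV : U * V * U = U) : Z * U * V * (U * W) = Z * U * W := by
  calc Z * U * V * (U * W) = Z * (U * V * U) * W := by simp only [Matrix.mul_assoc]
    _ = Z * U * W := by rw [hV]

theorem eq_submatrix_col_mul_mul_submatrix_row [Fintype m] [Fintype n] [Fintype l] [Fintype o]
    (X : Matrix m n K) (g : l → m) (f : o → n) (hcol : (X.submatrix id f).rank = X.rank)
    (hrow : (X.submatrix g id).rank = X.rank) (V : Matrix o l K)
    (hV : X.submatrix g f * V * X.submatrix g f = X.submatrix g f) :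
    X = X.submatrix id f * V * X.submatrix g id := by
  obtain ⟨W, hW⟩ := X.exists_eq_submatrix_col_mul_of_rank_eq f hcol
  obtain ⟨Z, hZ⟩ := X.exists_eq_mul_submatrix_row_of_rank_eq g hrow
  have hC : X.submatrix id f = Z * X.submatrix g f := by
    conv_lhs => rw [hZ]
    rw [submatrix_mul _ _ id id f Function.bijective_id, submatrix_id_id, submatrix_submatrix]
    rfl
  have hR : X.submatrix g id = X.submatrix g f * W := by
    conv_lhs => rw [hW]
    rw [submatrix_mul _ _ g id id Function.bijective_id, submatrix_id_id, submatrix_submatrix]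
    rfl
  rw [hC, hR, mul_mul_mul_eq_of_mul_mul_eq_self _ _ _ _ hV, ← hC, ← hW]

end Matrix

/-- Let `X ∈ ℝ^{m×n}` have rank `r`, let `I ⊆ [m]`, `J ⊆ [n]`,
and set `C = X[:,J]`, `R = X[I,:]`, `U = X[I,J]`. If
`rank C = rank R = rank X = r`, then `X = C U† R`. -/
theorem cur_decomposition_of_rank (m n r : ℕ) (X : Matrix (Fin m) (Fin n) ℝ)
    (hrankX : X.rank = r) (I : Finset (Fin m)) (J : Finset (Fin n))
    (C : Matrix (Fin m) ↥J ℝ) (R : Matrix ↥I (Fin n) ℝ) (U : Matrix ↥I ↥J ℝ)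
    (hC : C = X.submatrix id (fun j : ↥J => (j : Fin n)))
    (hR : R = X.submatrix (fun i : ↥I => (i : Fin m)) id)
    (hU : U = X.submatrix (fun i : ↥I => (i : Fin m)) (fun j : ↥J => (j : Fin n)))
    (hrankC : C.rank = r) (hrankR : R.rank = r)
    (Udag : Matrix ↥J ↥I ℝ) (hUdag : IsMPInv U Udag) :
    X = C * Udag * R := by
  subst hC hR hU
  exact X.eq_submatrix_col_mul_mul_submatrix_row _ _ (hrankC.trans hrankX.symm)
    (hrankR.trans hrankX.symm) Udag hUdag.1
end

section
/- Let X ∈ ℝ^{m×n} be a matrix of rank r, let I ⊆ {1,…,m} and J ⊆ {1,…,n}, and set C = [X]_{:,J}, R = [X]_{I,:}, and U = [X]_{I,J}. If rank(U) = rank(X) = r, then the two CUR decompositions coincide and recover X: C U† R = C C† X R† R = X. -/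
open Matrix

/-- If `A * S` has rank at least that of `A`, then `A` factors through `A * S`. -/
lemma exists_right_factor {α β γ : Type*} [Fintype α] [Fintype β] [Fintype γ]
    [DecidableEq β] (A : Matrix α β ℝ) (S : Matrix β γ ℝ)
    (h : A.rank ≤ (A * S).rank) : ∃ V : Matrix γ β ℝ, (A * S) * V = A := by
  have hle : LinearMap.range (A * S).mulVecLin ≤ LinearMap.range A.mulVecLin := by
    rintro x ⟨v, rfl⟩
    exact ⟨S *ᵥ v, by simp [mulVec_mulVec]⟩
  unfold Matrix.rank at h
  have heq : LinearMap.range (A * S).mulVecLin = LinearMap.range A.mulVecLin :=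
    Submodule.eq_of_le_of_finrank_le hle h
  have hcol : ∀ j : β, ∃ v : γ → ℝ, (A * S) *ᵥ v = A *ᵥ Pi.single j 1 := by
    intro j
    have : A *ᵥ Pi.single j 1 ∈ LinearMap.range (A * S).mulVecLin := by
      rw [heq]; exact ⟨Pi.single j 1, rfl⟩
    obtain ⟨v, hv⟩ := this
    exact ⟨v, hv⟩
  choose v hv using hcol
  refine ⟨Matrix.of (fun i j => v j i), ?_⟩
  ext i j
  have := congrFun (hv j) i
  simpa [Matrix.mul_apply, Matrix.mulVec, dotProduct, Pi.single_apply, mul_ite,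
    Finset.sum_ite_eq'] using this

/-- Let `X ∈ ℝ^{m×n}` have rank `r`, let `I ⊆ [m]`, `J ⊆ [n]`,
and set `C = X[:,J]`, `R = X[I,:]`, `U = X[I,J]`. If `rank U = rank X = r`, then
the two CUR decompositions coincide and recover `X`:
`C U† R = C C† X R† R = X`. -/
theorem cur_decompositions_coincide (m n r : ℕ) (X : Matrix (Fin m) (Fin n) ℝ)
    (hrankX : X.rank = r) (I : Finset (Fin m)) (J : Finset (Fin n))
    (C : Matrix (Fin m) ↥J ℝ) (R : Matrix ↥I (Fin n) ℝ) (U : Matrix ↥I ↥J ℝ)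
    (hC : C = X.submatrix id (fun j : ↥J => (j : Fin n)))
    (hR : R = X.submatrix (fun i : ↥I => (i : Fin m)) id)
    (hU : U = X.submatrix (fun i : ↥I => (i : Fin m)) (fun j : ↥J => (j : Fin n)))
    (hrankU : U.rank = X.rank)
    (Udag : Matrix ↥J ↥I ℝ) (hUdag : IsMPInv U Udag)
    (Cdag : Matrix ↥J (Fin m) ℝ) (hCdag : IsMPInv C Cdag)
    (Rdag : Matrix (Fin n) ↥I ℝ) (hRdag : IsMPInv R Rdag) :
    C * Udag * R = C * Cdag * X * Rdag * R ∧ C * Udag * R = X := by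
  classical
  -- selection matrices
  set S : Matrix (Fin n) ↥J ℝ := Matrix.of (fun k j => if k = (j : Fin n) then 1 else 0) with hS
  set P : Matrix ↥I (Fin m) ℝ := Matrix.of (fun i k => if (i : Fin m) = k then 1 else 0) with hP
  have hCS : C = X * S := by
    rw [hC]; ext i j
    simp [hS, Matrix.mul_apply, Matrix.submatrix_apply]
  have hRP : R = P * X := by
    rw [hR]; ext i j
    simp [hP, Matrix.mul_apply, Matrix.submatrix_apply]
  have hUPC : U = P * C := by
    rw [hU, hC]; ext i j
    simp [hP, Matrix.mul_apply, Matrix.submatrix_apply]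
  have hURS : U = R * S := by
    rw [hU, hR]; ext i j
    simp [hS, Matrix.mul_apply, Matrix.submatrix_apply]
  -- rank facts
  have hrankC : C.rank = X.rank := by
    have h1 : C.rank ≤ X.rank := hCS ▸ Matrix.rank_mul_le_left X S
    have h2 : U.rank ≤ C.rank := hUPC ▸ Matrix.rank_mul_le_right P C
    omega
  have hrankR : R.rank = X.rank := by
    have h1 : R.rank ≤ X.rank := hRP ▸ Matrix.rank_mul_le_right P X
    have h2 : U.rank ≤ R.rank := hURS ▸ Matrix.rank_mul_le_left R S
    omega
  -- X = C * V for some V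
  obtain ⟨V, hV⟩ := exists_right_factor X S (by rw [← hCS, hrankC])
  rw [← hCS] at hV
  -- Xᵀ = Rᵀ * W' for some W'
  obtain ⟨W', hW'⟩ := exists_right_factor Xᵀ Pᵀ (by
    rw [← Matrix.transpose_mul, ← hRP, Matrix.rank_transpose, Matrix.rank_transpose, hrankR])
  rw [← Matrix.transpose_mul, ← hRP] at hW'
  set W : Matrix (Fin m) ↥I ℝ := W'ᵀ with hWdef
  have hW : W * R = X := by
    have := congrArg Matrix.transpose hW'
    rwa [Matrix.transpose_mul, Matrix.transpose_transpose, Matrix.transpose_transpose] at this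
  -- derived factorizations
  have hRV : R = U * V := by rw [hRP, ← hV, ← Matrix.mul_assoc, ← hUPC]
  have hCW : C = W * U := by rw [hCS, ← hW, Matrix.mul_assoc, ← hURS]
  -- main identity : C * Udag * R = X
  have hmain : C * Udag * R = X := by
    calc C * Udag * R = W * (U * Udag * U) * V := by
          rw [hCW, hRV]; simp only [Matrix.mul_assoc]
      _ = W * U * V := by rw [hUdag.1, Matrix.mul_assoc]
      _ = C * V := by rw [← hCW]
      _ = X := hV
  refine ⟨?_, hmain⟩
  have h1 : C * Cdag * X = X := by
    conv_lhs => rw [← hV]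
    rw [← Matrix.mul_assoc, hCdag.1, hV]
  have h2 : X * Rdag * R = X := by
    conv_lhs => rw [← hW]
    rw [Matrix.mul_assoc W R Rdag, Matrix.mul_assoc W, hRdag.1, hW]
  rw [Matrix.mul_assoc (C * Cdag * X), h1, ← Matrix.mul_assoc, h2, hmain]
end
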